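/- arXiv:1103.0371 — 4 statements merged into one kernel-verified Lean document; each statement's English description precedes it below -/
import Mathlib

section
/- Let (Ω, ℱ, μ) be a probability space, 2 ≤ p < ∞, θ ∈ (0,1], a < b, n ≥ 1, and c₃ ≥ 0. Let (Y_t)_{t∈[a,b]} be a family of real random variables in L^p(μ) with ‖Y_t − Y_s‖_p ≤ c₃ (∫_s^t (b−r)^{θ−1} dr)^{1/2} for all a ≤ s < t ≤ b. Let (t_k)_{k=0}^n be the θ-net on [a,b] and define S_t := ((t_k − t) Y_{t_{k−1}} + (t − t_{k−1}) Y_{t_k})/(t_k − t_{k−1}) for t ∈ [t_{k−1}, t_k], k = 1, …, n. Then sup_{t∈[a,b]} ‖Y_t − S_t‖_p ≤ c₃ (b−a)^{θ/2} θ^{−1/2} n^{−1/2}. -/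
/-! On a cell `[t_{k-1}, t_k]` of the θ-net, `Y_t − S_t` is a convex combination of the
increments `Y_t − Y_{t_{k-1}}` and `Y_t − Y_{t_k}`, so by Minkowski it is bounded by the largest
increment of `Y` inside the cell. Since `∫_s^u (b−r)^{θ−1} dr = ((b−s)^θ − (b−u)^θ)/θ`, hypothesis
(C3) bounds such an increment by `c₃ (((b−t_{k−1})^θ − (b−t_k)^θ)/θ)^{1/2}`, and the θ-net is
precisely the partition on which `(b − t_k)^θ = (b−a)^θ (1 − k/n)` drops by the constant step
`(b−a)^θ/n`. -/

open MeasureTheory Set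
open scoped ENNReal

/-- The `θ`-net `(t_k^{n,θ})_{k=0}^n` on `[a,b]`:
`t_k := a + (b−a) (1 − (1 − k/n)^{1/θ})`. -/
noncomputable def thetaNet (θ a b : ℝ) (n k : ℕ) : ℝ :=
  a + (b - a) * (1 - (1 - (k : ℝ) / (n : ℝ)) ^ ((1 : ℝ) / θ))

section ThetaNet

variable {θ a b : ℝ} {n k : ℕ}

lemma sub_thetaNet (θ a b : ℝ) (n k : ℕ) :
    b - thetaNet θ a b n k = (b - a) * (1 - (k : ℝ) / n) ^ (1 / θ) := by
  unfold thetaNet; ring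

lemma one_sub_natCast_div_mem_Icc (hkn : k ≤ n) : 1 - (k : ℝ) / n ∈ Icc 0 1 := by
  constructor
  · exact sub_nonneg.2 (div_le_one_of_le₀ (by exact_mod_cast hkn) n.cast_nonneg)
  · exact sub_le_self _ (by positivity)

lemma thetaNet_le (hab : a ≤ b) (hkn : k ≤ n) : thetaNet θ a b n k ≤ b := by
  have h := mul_nonneg (sub_nonneg.2 hab)
    (Real.rpow_nonneg (one_sub_natCast_div_mem_Icc hkn).1 (1 / θ))
  rw [← sub_thetaNet] at h
  linarith

lemma le_thetaNet (hθ : 0 ≤ θ) (hab : a ≤ b) (hkn : k ≤ n) : a ≤ thetaNet θ a b n k := by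
  obtain ⟨h0, h1⟩ := one_sub_natCast_div_mem_Icc hkn
  have := Real.rpow_le_one h0 h1 (one_div_nonneg.2 hθ)
  unfold thetaNet
  nlinarith

lemma sub_thetaNet_rpow (hθ : 0 < θ) (hab : a ≤ b) (hkn : k ≤ n) :
    (b - thetaNet θ a b n k) ^ θ = (b - a) ^ θ * (1 - k / n) := by
  have h0 := (one_sub_natCast_div_mem_Icc hkn).1
  rw [sub_thetaNet, Real.mul_rpow (sub_nonneg.2 hab) (Real.rpow_nonneg h0 _), ← Real.rpow_mul h0,
    one_div_mul_cancel hθ.ne', Real.rpow_one]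

lemma sub_thetaNet_rpow_sub_succ (hθ : 0 < θ) (hab : a ≤ b) (hkn : k + 1 ≤ n) :
    (b - thetaNet θ a b n k) ^ θ - (b - thetaNet θ a b n (k + 1)) ^ θ = (b - a) ^ θ / n := by
  have hn : (n : ℝ) ≠ 0 := by norm_cast; omega
  rw [sub_thetaNet_rpow hθ hab (by omega), sub_thetaNet_rpow hθ hab hkn]
  field_simp
  push_cast
  ring

lemma thetaNet_lt_succ (hθ : 0 < θ) (hab : a < b) (hkn : k + 1 ≤ n) :
    thetaNet θ a b n k < thetaNet θ a b n (k + 1) := by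
  have hgap := sub_thetaNet_rpow_sub_succ hθ hab.le hkn
  have hpos : 0 < (b - a) ^ θ / n := by
    have : (0 : ℝ) < n := by norm_cast; omega
    have := Real.rpow_pos_of_pos (sub_pos.2 hab) θ
    positivity
  have h₀ : 0 ≤ b - thetaNet θ a b n k := sub_nonneg.2 (thetaNet_le hab.le (by omega))
  have h₁ : 0 ≤ b - thetaNet θ a b n (k + 1) := sub_nonneg.2 (thetaNet_le hab.le hkn)
  have := (Real.rpow_lt_rpow_iff h₁ h₀ hθ).1 (by linarith)
  linarith

end ThetaNet

lemma integral_sub_rpow_sub_one {θ : ℝ} (hθ : 0 < θ) (b s u : ℝ) :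
    ∫ r in s..u, (b - r) ^ (θ - 1) = ((b - s) ^ θ - (b - u) ^ θ) / θ := by
  rw [intervalIntegral.integral_comp_sub_left (fun x => x ^ (θ - 1)) b,
    integral_rpow (Or.inl (by linarith))]
  simp

section Lp

variable {Ω E : Type*} {mΩ : MeasurableSpace Ω} {μ : Measure Ω} [NormedAddCommGroup E]
  {p : ℝ≥0∞}

lemma eLpNorm_sub_le_of_subinterval {Y : ℝ → Ω → E} {a b θ c₃ : ℝ} (hθ : 0 < θ) (hc₃ : 0 ≤ c₃)
    (hY : ∀ s t : ℝ, a ≤ s → s < t → t ≤ b →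
      eLpNorm (Y t - Y s) p μ
        ≤ ENNReal.ofReal (c₃ * (∫ r in s..t, (b - r) ^ (θ - 1)) ^ ((1 : ℝ) / 2)))
    {s₀ s₁ s u : ℝ} (has₀ : a ≤ s₀) (hs₁b : s₁ ≤ b) (hs : s₀ ≤ s) (hsu : s ≤ u) (hu : u ≤ s₁) :
    eLpNorm (Y u - Y s) p μ
      ≤ ENNReal.ofReal (c₃ * (((b - s₀) ^ θ - (b - s₁) ^ θ) / θ) ^ ((1 : ℝ) / 2)) := by
  rcases hsu.eq_or_lt with rfl | hsu
  · simp
  refine (hY s u (has₀.trans hs) hsu (hu.trans hs₁b)).trans (ENNReal.ofReal_le_ofReal ?_)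
  have hu_s : (b - u) ^ θ ≤ (b - s) ^ θ := Real.rpow_le_rpow (by linarith) (by linarith) hθ.le
  have hs_s₀ : (b - s) ^ θ ≤ (b - s₀) ^ θ := Real.rpow_le_rpow (by linarith) (by linarith) hθ.le
  have hs₁_u : (b - s₁) ^ θ ≤ (b - u) ^ θ := Real.rpow_le_rpow (by linarith) (by linarith) hθ.le
  rw [integral_sub_rpow_sub_one hθ]
  gcongr

variable [NormedSpace ℝ E]

lemma eLpNorm_smul_add_smul_le (hp : 1 ≤ p) {f g : Ω → E} (hf : AEStronglyMeasurable f μ)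
    (hg : AEStronglyMeasurable g μ) {α β : ℝ} (hα : 0 ≤ α) (hβ : 0 ≤ β) (hαβ : α + β = 1)
    {C : ℝ≥0∞} (hfC : eLpNorm f p μ ≤ C) (hgC : eLpNorm g p μ ≤ C) :
    eLpNorm (α • f + β • g) p μ ≤ C :=
  calc eLpNorm (α • f + β • g) p μ
      ≤ eLpNorm (α • f) p μ + eLpNorm (β • g) p μ :=
        eLpNorm_add_le (hf.const_smul α) (hg.const_smul β) hp
    _ = ENNReal.ofReal α * eLpNorm f p μ + ENNReal.ofReal β * eLpNorm g p μ := by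
        rw [eLpNorm_const_smul, eLpNorm_const_smul, Real.enorm_eq_ofReal hα,
          Real.enorm_eq_ofReal hβ]
    _ ≤ ENNReal.ofReal α * C + ENNReal.ofReal β * C := by gcongr
    _ = C := by
        rw [← add_mul, ← ENNReal.ofReal_add hα hβ, hαβ, ENNReal.ofReal_one, one_mul]

lemma eLpNorm_sub_lineInterp_le (hp : 1 ≤ p) {Y : ℝ → Ω → E} {s₀ s₁ t : ℝ} (hs : s₀ < s₁)
    (ht : t ∈ Icc s₀ s₁) (hY₀ : AEStronglyMeasurable (Y s₀) μ)
    (hY₁ : AEStronglyMeasurable (Y s₁) μ) (hYt : AEStronglyMeasurable (Y t) μ) {C : ℝ≥0∞}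
    (hC₀ : eLpNorm (Y t - Y s₀) p μ ≤ C) (hC₁ : eLpNorm (Y s₁ - Y t) p μ ≤ C) :
    eLpNorm (Y t - (s₁ - s₀)⁻¹ • ((s₁ - t) • Y s₀ + (t - s₀) • Y s₁)) p μ ≤ C := by
  have hd : s₁ - s₀ ≠ 0 := (sub_pos.2 hs).ne'
  have hαβ : (s₁ - t) / (s₁ - s₀) + (t - s₀) / (s₁ - s₀) = 1 := by field_simp; ring
  have hsplit : Y t - (s₁ - s₀)⁻¹ • ((s₁ - t) • Y s₀ + (t - s₀) • Y s₁)
      = ((s₁ - t) / (s₁ - s₀)) • (Y t - Y s₀) + ((t - s₀) / (s₁ - s₀)) • (Y t - Y s₁) := by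
    conv_lhs => rw [← one_smul ℝ (Y t), ← hαβ]
    simp only [div_eq_inv_mul, ← smul_smul]
    module
  rw [hsplit]
  rw [eLpNorm_sub_comm] at hC₁
  exact eLpNorm_smul_add_smul_le hp (hYt.sub hY₀) (hYt.sub hY₁)
    (div_nonneg (sub_nonneg.2 ht.2) (sub_pos.2 hs).le)
    (div_nonneg (sub_nonneg.2 ht.1) (sub_pos.2 hs).le) hαβ hC₀ hC₁

end Lp

theorem C3_implies_C6_abstract_general
    {Ω : Type*} {mΩ : MeasurableSpace Ω} (μ : Measure Ω)
    (p : ℝ≥0∞) (hp1 : 2 ≤ p)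
    (a b θ c₃ : ℝ) (hab : a < b) (hθ : θ ∈ Set.Ioc (0 : ℝ) 1) (hc₃ : 0 ≤ c₃)
    (n : ℕ)
    (Y : ℝ → Ω → ℝ)
    (hY_Lp : ∀ t ∈ Set.Icc a b, MemLp (Y t) p μ)
    (hY : ∀ s t : ℝ, a ≤ s → s < t → t ≤ b →
      eLpNorm (Y t - Y s) p μ
        ≤ ENNReal.ofReal (c₃ * (∫ r in s..t, (b - r) ^ (θ - 1)) ^ ((1 : ℝ) / 2)))
    (k : ℕ) (hk1 : 1 ≤ k) (hk2 : k ≤ n)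
    (t : ℝ) (ht : t ∈ Set.Icc (thetaNet θ a b n (k - 1)) (thetaNet θ a b n k)) :
    eLpNorm
        (fun ω => Y t ω -
          ((thetaNet θ a b n k - t) * Y (thetaNet θ a b n (k - 1)) ω
            + (t - thetaNet θ a b n (k - 1)) * Y (thetaNet θ a b n k) ω)
            / (thetaNet θ a b n k - thetaNet θ a b n (k - 1))) p μ
      ≤ ENNReal.ofReal
          (c₃ * (b - a) ^ (θ / 2) * θ ^ (-(1 : ℝ) / 2) * (n : ℝ) ^ (-(1 : ℝ) / 2)) := by
  obtain ⟨hθ₀, -⟩ := hθ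
  obtain ⟨j, rfl⟩ : ∃ j, k = j + 1 := ⟨k - 1, by omega⟩
  rw [Nat.add_sub_cancel] at ht ⊢
  set s₀ := thetaNet θ a b n j
  set s₁ := thetaNet θ a b n (j + 1)
  have has₀ : a ≤ s₀ := le_thetaNet hθ₀.le hab.le (by omega)
  have hs₁b : s₁ ≤ b := thetaNet_le hab.le hk2
  have hs₀₁ : s₀ < s₁ := thetaNet_lt_succ hθ₀ hab hk2
  have hmeas : ∀ s ∈ Icc s₀ s₁, AEStronglyMeasurable (Y s) μ :=
    fun s hs => (hY_Lp s ⟨has₀.trans hs.1, hs.2.trans hs₁b⟩).1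
  have hcell : c₃ * (((b - s₀) ^ θ - (b - s₁) ^ θ) / θ) ^ ((1 : ℝ) / 2)
      = c₃ * (b - a) ^ (θ / 2) * θ ^ (-(1 : ℝ) / 2) * (n : ℝ) ^ (-(1 : ℝ) / 2) := by
    rw [sub_thetaNet_rpow_sub_succ hθ₀ hab.le hk2, div_div,
      Real.div_rpow (by positivity) (by positivity), Real.mul_rpow n.cast_nonneg hθ₀.le,
      ← Real.rpow_mul (sub_pos.2 hab).le, neg_div, Real.rpow_neg hθ₀.le,
      Real.rpow_neg n.cast_nonneg]
    ring_nf
  have key := eLpNorm_sub_lineInterp_le (one_le_two.trans hp1) hs₀₁ ht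
    (hmeas _ ⟨le_rfl, hs₀₁.le⟩) (hmeas _ ⟨hs₀₁.le, le_rfl⟩) (hmeas t ht)
    (eLpNorm_sub_le_of_subinterval hθ₀ hc₃ hY has₀ hs₁b le_rfl ht.1 ht.2)
    (eLpNorm_sub_le_of_subinterval hθ₀ hc₃ hY has₀ hs₁b ht.1 ht.2 le_rfl)
  rw [hcell] at key
  convert key using 2
  funext ω
  simp only [Pi.sub_apply, Pi.smul_apply, Pi.add_apply, smul_eq_mul]
  ring

/-- **(C3_l) ⇒ (C6_l), abstract form.** If `(Y_t)_{t ∈ [a,b]} ⊆ L^p(μ)` satisfies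
`‖Y_t − Y_s‖_p ≤ c₃ (∫_s^t (b−r)^{θ−1} dr)^{1/2}` for `a ≤ s < t ≤ b`, and `S` denotes
the piecewise linear interpolation of `Y` over the `θ`-net `(t_k)_{k=0}^n` on `[a,b]`,
then `sup_{t ∈ [a,b]} ‖Y_t − S_t‖_p ≤ c₃ (b−a)^{θ/2} θ^{−1/2} n^{−1/2}`. -/
theorem C3_implies_C6_abstract
    {Ω : Type*} {mΩ : MeasurableSpace Ω} (μ : Measure Ω) [IsProbabilityMeasure μ]
    (p : ℝ≥0∞) (hp1 : 2 ≤ p) (hp2 : p ≠ ∞)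
    (a b θ c₃ : ℝ) (hab : a < b) (hθ : θ ∈ Set.Ioc (0 : ℝ) 1) (hc₃ : 0 ≤ c₃)
    (n : ℕ) (hn : 1 ≤ n)
    (Y : ℝ → Ω → ℝ)
    (hY_Lp : ∀ t ∈ Set.Icc a b, MemLp (Y t) p μ)
    (hY : ∀ s t : ℝ, a ≤ s → s < t → t ≤ b →
      eLpNorm (Y t - Y s) p μ
        ≤ ENNReal.ofReal (c₃ * (∫ r in s..t, (b - r) ^ (θ - 1)) ^ ((1 : ℝ) / 2)))
    (k : ℕ) (hk1 : 1 ≤ k) (hk2 : k ≤ n)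
    (t : ℝ) (ht : t ∈ Set.Icc (thetaNet θ a b n (k - 1)) (thetaNet θ a b n k)) :
    eLpNorm
        (fun ω => Y t ω -
          ((thetaNet θ a b n k - t) * Y (thetaNet θ a b n (k - 1)) ω
            + (t - thetaNet θ a b n (k - 1)) * Y (thetaNet θ a b n k) ω)
            / (thetaNet θ a b n k - thetaNet θ a b n (k - 1))) p μ
      ≤ ENNReal.ofReal
          (c₃ * (b - a) ^ (θ / 2) * θ ^ (-(1 : ℝ) / 2) * (n : ℝ) ^ (-(1 : ℝ) / 2)) :=
  C3_implies_C6_abstract_general (mΩ := mΩ) μ p hp1 a b θ c₃ hab hθ hc₃ n Y hY_Lp hY k hk1 hk2 t ht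
end

section
/- Let (Ω, ℱ, (ℱ_t)_{t∈[a,b]}, μ) be a filtered probability space, 2 ≤ p < ∞, θ ∈ (0,1], and c₆ ≥ 0. Let (Y_t)_{t∈[a,b]} be an adapted family of real random variables with Y_t ∈ L^p(μ) for all t. Suppose that for every n ≥ 1 there exists an adapted spline S^n = (S^n_t)_{t∈[a,b]} based on the θ-net (t_k^{n,θ})_{k=0}^n on [a,b] such that √n · sup_{t∈[a,b]} ‖Y_t − S^n_t‖_p ≤ c₆. Then there exists a constant c > 0 such that ‖Y_b − E(Y_b|ℱ_t)‖_p ≤ c (b−t)^{θ/2} for all t ∈ [a,b). -/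
/-!
For `t ∈ [a,b)` choose `n ≈ ((b-a) / (2(b-t)))^θ`: then the last piece `[t_{n-1}, b]` of the
`θ`-net has length at least `2(b-t)`, so `S_t = κ S_{t_{n-1}} + λ S_b` with `λ ≥ 1/2`. As
`S_{t_{n-1}}` and `Y_t` are `ℱ_t`-measurable, `S_t - E(S_t|ℱ_t) = λ (S_b - E(S_b|ℱ_t))`, and since
conditional expectation contracts `L^p`, moving a function by `ε` in `L^p` moves its deviation
`f - E(f|ℱ_t)` by at most `2ε`. Chaining `Y_t → S_t → S_b → Y_b` gives the bound `6 c₆ / √n`,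
which is of order `(b-t)^{θ/2}`. For `t` close to `a` the trivial bound `2 ‖Y_b‖_p` suffices.
-/

open MeasureTheory
open scoped ENNReal

namespace MeasureTheory

section ConditionalDeviation

variable {α E : Type*} {m m0 : MeasurableSpace α} {μ : Measure α} {p : ℝ≥0∞}
  [NormedAddCommGroup E] [NormedSpace ℝ E] [CompleteSpace E]

theorem eLpNorm_sub_condExp_le_two_mul (hp : 1 ≤ p) {f : α → E}
    (hf : AEStronglyMeasurable f μ) :
    eLpNorm (f - μ[f|m]) p μ ≤ 2 * eLpNorm f p μ :=
  calc eLpNorm (f - μ[f|m]) p μ ≤ eLpNorm f p μ + eLpNorm (μ[f|m]) p μ :=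
        eLpNorm_sub_le hf integrable_condExp.aestronglyMeasurable hp
    _ ≤ 2 * eLpNorm f p μ := by
        rw [two_mul]; gcongr; exact eLpNorm_condExp_le_eLpNorm f hp

theorem eLpNorm_sub_condExp_le_add (hp : 1 ≤ p) {f g : α → E}
    (hf : Integrable f μ) (hg : Integrable g μ) :
    eLpNorm (f - μ[f|m]) p μ ≤ eLpNorm (g - μ[g|m]) p μ + 2 * eLpNorm (f - g) p μ := by
  have hsplit : f - μ[f|m] =ᵐ[μ] (g - μ[g|m]) + ((f - g) - μ[f - g|m]) := by
    filter_upwards [condExp_sub hf hg m] with x hx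
    simp only [Pi.add_apply, Pi.sub_apply, hx]
    abel
  rw [eLpNorm_congr_ae hsplit]
  refine (eLpNorm_add_le (hg.1.sub integrable_condExp.1)
    ((hf.sub hg).1.sub integrable_condExp.1) hp).trans ?_
  gcongr
  exact eLpNorm_sub_condExp_le_two_mul hp (hf.sub hg).1

theorem eLpNorm_add_smul_sub_condExp (hm : m ≤ m0) [SigmaFinite (μ.trim hm)] {X Z : α → E}
    (hX_meas : StronglyMeasurable[m] X) (hX : Integrable X μ) (hZ : Integrable Z μ) (c : ℝ) :
    eLpNorm ((X + c • Z) - μ[X + c • Z|m]) p μ = ‖c‖ₑ * eLpNorm (Z - μ[Z|m]) p μ := by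
  have hdev : (X + c • Z) - μ[X + c • Z|m] =ᵐ[μ] c • (Z - μ[Z|m]) := by
    filter_upwards [condExp_add hX (hZ.smul c) m, condExp_smul c Z m] with x hadd hsmul
    simp only [Pi.add_apply, Pi.sub_apply, Pi.smul_apply, hadd, hsmul,
      condExp_of_stronglyMeasurable hm hX_meas hX, smul_sub]
    abel
  rw [eLpNorm_congr_ae hdev, eLpNorm_const_smul]

theorem eLpNorm_sub_condExp_le_of_interpolation [IsFiniteMeasure μ] (hm : m ≤ m0)
    (hp : 1 ≤ p) {Yt Yb X Z : α → E} {c : ℝ} {ε : ℝ≥0∞}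
    (hYt_meas : StronglyMeasurable[m] Yt) (hYt : MemLp Yt p μ) (hYb : MemLp Yb p μ)
    (hX_meas : StronglyMeasurable[m] X) (hX : MemLp X p μ) (hZ : MemLp Z p μ) (hc : 1 / 2 ≤ c)
    (hεt : eLpNorm (Yt - (X + c • Z)) p μ ≤ ε) (hεb : eLpNorm (Yb - Z) p μ ≤ ε) :
    eLpNorm (Yb - μ[Yb|m]) p μ ≤ 6 * ε := by
  have hSt : Integrable (X + c • Z) μ := (hX.add (hZ.const_smul c)).integrable hp
  have hdev_t : ‖c‖ₑ * eLpNorm (Z - μ[Z|m]) p μ ≤ 2 * ε := by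
    rw [← eLpNorm_add_smul_sub_condExp hm hX_meas (hX.integrable hp) (hZ.integrable hp)]
    calc eLpNorm ((X + c • Z) - μ[X + c • Z|m]) p μ
        ≤ eLpNorm (Yt - μ[Yt|m]) p μ + 2 * eLpNorm (X + c • Z - Yt) p μ :=
          eLpNorm_sub_condExp_le_add hp hSt (hYt.integrable hp)
      _ ≤ 2 * ε := by
          rw [condExp_of_stronglyMeasurable hm hYt_meas (hYt.integrable hp), sub_self,
            eLpNorm_zero, zero_add, eLpNorm_sub_comm]
          gcongr
  have hdev_b : eLpNorm (Z - μ[Z|m]) p μ ≤ 4 * ε := by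
    have hc' : (2 : ℝ≥0∞)⁻¹ ≤ ‖c‖ₑ := by
      rw [← ENNReal.ofReal_ofNat, ← ENNReal.ofReal_inv_of_pos two_pos, ← ofReal_norm,
        Real.norm_eq_abs]
      exact ENNReal.ofReal_le_ofReal (by rw [abs_of_nonneg (by linarith)]; linarith)
    rw [show (4 : ℝ≥0∞) = 2 * 2 by norm_num, mul_assoc,
      ← ENNReal.inv_mul_le_iff (by norm_num) (by norm_num)]
    exact (mul_le_mul_left hc' _).trans hdev_t
  calc eLpNorm (Yb - μ[Yb|m]) p μ
      ≤ eLpNorm (Z - μ[Z|m]) p μ + 2 * eLpNorm (Yb - Z) p μ :=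
        eLpNorm_sub_condExp_le_add hp (hYb.integrable hp) (hZ.integrable hp)
    _ ≤ 4 * ε + 2 * ε := by gcongr
    _ = 6 * ε := by rw [← add_mul]; norm_num

end ConditionalDeviation

end MeasureTheory

theorem exists_one_le_nat_le_inv_rpow_and_inv_sqrt_le {r θ : ℝ} (hr0 : 0 < r) (hr1 : r ≤ 1)
    (hθ : 0 < θ) :
    ∃ n : ℕ, 1 ≤ n ∧ r ≤ ((n : ℝ)⁻¹) ^ (1 / θ) ∧ (√n)⁻¹ ≤ √2 * r ^ (θ / 2) := by
  have hrθ : 0 < r ^ θ := Real.rpow_pos_of_pos hr0 θ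
  have hx : 1 ≤ (r ^ θ)⁻¹ := one_le_inv₀ hrθ |>.2 (Real.rpow_le_one hr0.le hr1 hθ.le)
  set n := ⌊(r ^ θ)⁻¹⌋₊
  have hn : 1 ≤ n := Nat.le_floor (by exact_mod_cast hx)
  have hn0 : (0 : ℝ) < n := by exact_mod_cast hn
  have hnx : (n : ℝ) ≤ (r ^ θ)⁻¹ := Nat.floor_le (by linarith)
  have hxn : (r ^ θ)⁻¹ ≤ 2 * n := by
    have := Nat.lt_floor_add_one (r ^ θ)⁻¹
    have : (1 : ℝ) ≤ n := by exact_mod_cast hn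
    linarith
  refine ⟨n, hn, ?_, ?_⟩
  · rw [one_div, Real.le_rpow_inv_iff_of_pos hr0.le (by positivity) hθ, le_inv_comm₀ hrθ hn0]
    exact hnx
  · have hinv : (n : ℝ)⁻¹ ≤ 2 * r ^ θ := by
      rw [inv_le_comm₀ hn0 (by positivity), mul_inv, ← div_eq_inv_mul]
      linarith
    calc (√n)⁻¹ = √((n : ℝ)⁻¹) := (Real.sqrt_inv _).symm
      _ ≤ √(2 * r ^ θ) := Real.sqrt_le_sqrt hinv
      _ = √2 * r ^ (θ / 2) := by
        rw [Real.sqrt_mul zero_le_two, Real.sqrt_eq_rpow (r ^ θ), ← Real.rpow_mul hr0.le]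
        ring_nf

theorem le_ofReal_div_of_ofReal_mul_iSup₂_le {ι : Type*} {s : Set ι} {g : ι → ℝ≥0∞} {x c : ℝ}
    (hx : 0 < x) (h : ENNReal.ofReal x * ⨆ i ∈ s, g i ≤ ENNReal.ofReal c) ⦃i : ι⦄ (hi : i ∈ s) :
    g i ≤ ENNReal.ofReal (c / x) := by
  rw [ENNReal.ofReal_div_of_pos hx, ENNReal.le_div_iff_mul_le (by simp [hx]) (by simp), mul_comm]
  refine le_trans ?_ h
  gcongr
  exact le_iSup₂ (f := fun i (_ : i ∈ s) => g i) i hi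

theorem left_le_thetaNet {θ a b : ℝ} {n k : ℕ} (hab : a ≤ b) (hθ : 0 < θ) (hk : k ≤ n) :
    a ≤ thetaNet θ a b n k := by
  have hkn : 0 ≤ 1 - (k : ℝ) / n :=
    sub_nonneg.2 (div_le_one_of_le₀ (by exact_mod_cast hk) n.cast_nonneg)
  have : (1 - (k : ℝ) / n) ^ (1 / θ) ≤ 1 :=
    Real.rpow_le_one hkn (sub_le_self _ (by positivity)) (by positivity)
  unfold thetaNet
  nlinarith

theorem thetaNet_self (θ a b : ℝ) {n : ℕ} (hn : n ≠ 0) (hθ : θ ≠ 0) :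
    thetaNet θ a b n n = b := by
  simp [thetaNet, div_self ((Nat.cast_ne_zero (R := ℝ)).2 hn), Real.zero_rpow (inv_ne_zero hθ)]

theorem sub_thetaNet_pred (θ a b : ℝ) {n : ℕ} (hn : n ≠ 0) :
    b - thetaNet θ a b n (n - 1) = (b - a) * ((n : ℝ)⁻¹) ^ (1 / θ) := by
  have hn' : (n : ℝ) ≠ 0 := Nat.cast_ne_zero.2 hn
  have : 1 - ((n - 1 : ℕ) : ℝ) / n = (n : ℝ)⁻¹ := by
    rw [Nat.cast_pred (Nat.pos_of_ne_zero hn)]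
    field_simp
    ring
  rw [thetaNet, this]
  ring

section Spline

variable {Ω : Type*} {mΩ : MeasurableSpace Ω} {μ : Measure Ω} {p : ℝ≥0∞}
  {F : ℝ → MeasurableSpace Ω} {net : ℕ → ℝ} {n : ℕ} {S : ℝ → Ω → ℝ}

def IsAdaptedSpline (μ : Measure Ω) (p : ℝ≥0∞) (F : ℝ → MeasurableSpace Ω) (net : ℕ → ℝ)
    (n : ℕ) (S : ℝ → Ω → ℝ) : Prop :=
  (∀ k : ℕ, k ≤ n → MemLp (S (net k)) p μ ∧ StronglyMeasurable[F (net k)] (S (net k))) ∧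
  ∀ k : ℕ, 1 ≤ k → k ≤ n → ∀ t ∈ Set.Icc (net (k - 1)) (net k), ∀ ω : Ω,
    S t ω = ((net k - t) * S (net (k - 1)) ω + (t - net (k - 1)) * S (net k) ω)
      / (net k - net (k - 1))

theorem IsAdaptedSpline.eq_add_smul (hS : IsAdaptedSpline μ p F net n S) {k : ℕ} (hk1 : 1 ≤ k)
    (hkn : k ≤ n) {t : ℝ} (ht : t ∈ Set.Icc (net (k - 1)) (net k)) :
    S t = ((net k - t) / (net k - net (k - 1))) • S (net (k - 1))
      + ((t - net (k - 1)) / (net k - net (k - 1))) • S (net k) := by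
  funext ω
  rw [hS.2 k hk1 hkn t ht ω, add_div, mul_div_right_comm, mul_div_right_comm]
  rfl

theorem IsAdaptedSpline.eLpNorm_sub_condExp_le [IsFiniteMeasure μ]
    (hS : IsAdaptedSpline μ p F net n S) (hp : 1 ≤ p) (hn : 1 ≤ n) {t b : ℝ} (hb : net n = b)
    (htb : t < b) (hnet : 2 * (b - t) ≤ b - net (n - 1)) (hF_le : F t ≤ mΩ)
    (hF_mono : F (net (n - 1)) ≤ F t) {Y : ℝ → Ω → ℝ} (hYt_meas : StronglyMeasurable[F t] (Y t))
    (hYt : MemLp (Y t) p μ) (hYb : MemLp (Y b) p μ) {ε : ℝ≥0∞}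
    (hεt : eLpNorm (Y t - S t) p μ ≤ ε) (hεb : eLpNorm (Y b - S b) p μ ≤ ε) :
    eLpNorm (Y b - μ[Y b|F t]) p μ ≤ 6 * ε := by
  set s := net (n - 1)
  have hbs : 0 < b - s := by linarith
  obtain ⟨hSs, hSs_meas⟩ := hS.1 (n - 1) (Nat.sub_le n 1)
  obtain ⟨hSb, -⟩ := hS.1 n le_rfl
  have hSt := hS.eq_add_smul hn le_rfl (t := t) (by rw [hb]; constructor <;> linarith)
  rw [hb] at hSb hSt
  refine eLpNorm_sub_condExp_le_of_interpolation hF_le hp hYt_meas hYt hYb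
    ((hSs_meas.mono hF_mono).const_smul _) (hSs.const_smul _) hSb ?_ (hSt ▸ hεt) hεb
  rw [le_div_iff₀ hbs]
  linarith

end Spline

section ThetaNet

variable {Ω : Type*} {mΩ : MeasurableSpace Ω} {μ : Measure Ω} [IsFiniteMeasure μ] {p : ℝ≥0∞}
  {F : ℝ → MeasurableSpace Ω} {θ a b : ℝ} {Y : ℝ → Ω → ℝ} {t : ℝ}

theorem IsAdaptedSpline.eLpNorm_sub_condExp_le_of_thetaNet {n : ℕ} {S : ℝ → Ω → ℝ}
    (hS : IsAdaptedSpline μ p F (thetaNet θ a b n) n S) (hp : 1 ≤ p) (hn : 1 ≤ n)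
    (hab : a ≤ b) (hθ : 0 < θ) (ht : t ∈ Set.Ico a b)
    (htn : 2 * (b - t) ≤ (b - a) * ((n : ℝ)⁻¹) ^ (1 / θ)) (hF_le : F t ≤ mΩ)
    (hF_mono : ∀ s t : ℝ, a ≤ s → s ≤ t → t ≤ b → F s ≤ F t)
    (hYt_meas : StronglyMeasurable[F t] (Y t)) (hYt : MemLp (Y t) p μ) (hYb : MemLp (Y b) p μ)
    {ε : ℝ≥0∞} (hε : ∀ s ∈ Set.Icc a b, eLpNorm (Y s - S s) p μ ≤ ε) :
    eLpNorm (Y b - μ[Y b|F t]) p μ ≤ 6 * ε := by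
  have hnet : 2 * (b - t) ≤ b - thetaNet θ a b n (n - 1) := by
    rwa [sub_thetaNet_pred θ a b (by omega)]
  exact hS.eLpNorm_sub_condExp_le hp hn (thetaNet_self θ a b (by omega) hθ.ne') ht.2 hnet hF_le
    (hF_mono _ t (left_le_thetaNet hab hθ (Nat.sub_le n 1)) (by linarith [ht.2]) ht.2.le)
    hYt_meas hYt hYb (hε t ⟨ht.1, ht.2.le⟩) (hε b ⟨hab, le_rfl⟩)

theorem eLpNorm_sub_condExp_le_of_forall_thetaNet_spline {c₆ : ℝ} (hp : 1 ≤ p) (hab : a < b)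
    (hθ : 0 < θ) (hc₆ : 0 ≤ c₆) (hF_le : F t ≤ mΩ)
    (hF_mono : ∀ s t : ℝ, a ≤ s → s ≤ t → t ≤ b → F s ≤ F t)
    (hS : ∀ n : ℕ, 1 ≤ n → ∃ S : ℝ → Ω → ℝ, IsAdaptedSpline μ p F (thetaNet θ a b n) n S ∧
      ENNReal.ofReal √n * (⨆ t ∈ Set.Icc a b, eLpNorm (Y t - S t) p μ) ≤ ENNReal.ofReal c₆)
    (ht : t ∈ Set.Ico a b) (hr1 : 2 / (b - a) * (b - t) ≤ 1)
    (hYt_meas : StronglyMeasurable[F t] (Y t)) (hYt : MemLp (Y t) p μ) (hYb : MemLp (Y b) p μ) :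
    eLpNorm (Y b - μ[Y b|F t]) p μ
      ≤ ENNReal.ofReal (6 * √2 * c₆ * (2 / (b - a) * (b - t)) ^ (θ / 2)) := by
  set r := 2 / (b - a) * (b - t) with hr
  have hba : 0 < b - a := sub_pos.2 hab
  have hr0 : 0 < r := by have := sub_pos.2 ht.2; positivity
  obtain ⟨n, hn, hrn, hnr⟩ := exists_one_le_nat_le_inv_rpow_and_inv_sqrt_le hr0 hr1 hθ
  obtain ⟨S, hspline, hsup⟩ := hS n hn
  have htn : 2 * (b - t) ≤ (b - a) * ((n : ℝ)⁻¹) ^ (1 / θ) := by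
    rwa [hr, div_mul_eq_mul_div, div_le_iff₀' hba] at hrn
  calc eLpNorm (Y b - μ[Y b|F t]) p μ ≤ 6 * ENNReal.ofReal (c₆ / √n) :=
        hspline.eLpNorm_sub_condExp_le_of_thetaNet hp hn hab.le hθ ht htn hF_le hF_mono
          hYt_meas hYt hYb (le_ofReal_div_of_ofReal_mul_iSup₂_le (by positivity) hsup)
    _ = ENNReal.ofReal (6 * c₆ * (√n)⁻¹) := by
        rw [← ENNReal.ofReal_ofNat, ← ENNReal.ofReal_mul (by norm_num)]
        ring_nf
    _ ≤ ENNReal.ofReal (6 * c₆ * (√2 * r ^ (θ / 2))) := by gcongr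
    _ = ENNReal.ofReal (6 * √2 * c₆ * r ^ (θ / 2)) := by ring_nf

end ThetaNet

theorem C6_implies_C4_abstract_general
    {Ω : Type*} {mΩ : MeasurableSpace Ω} (μ : Measure Ω) [IsProbabilityMeasure μ]
    (p : ℝ≥0∞) (hp1 : 2 ≤ p)
    (a b θ c₆ : ℝ) (hab : a < b) (hθ : θ ∈ Set.Ioc (0 : ℝ) 1) (hc₆ : 0 ≤ c₆)
    (F : ℝ → MeasurableSpace Ω) (hF_le : ∀ t, F t ≤ mΩ)
    (hF_mono : ∀ s t : ℝ, a ≤ s → s ≤ t → t ≤ b → F s ≤ F t)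
    (Y : ℝ → Ω → ℝ)
    (hY_adapted : ∀ t ∈ Set.Icc a b, StronglyMeasurable[F t] (Y t))
    (hY_Lp : ∀ t ∈ Set.Icc a b, MemLp (Y t) p μ)
    (hS : ∀ n : ℕ, 1 ≤ n → ∃ S : ℝ → Ω → ℝ,
      -- `S` has adapted, `L^p` knots at the net points
      (∀ k : ℕ, k ≤ n → MemLp (S (thetaNet θ a b n k)) p μ ∧
        StronglyMeasurable[F (thetaNet θ a b n k)] (S (thetaNet θ a b n k))) ∧
      -- `S` is the linear interpolation of its knots over the net intervals
      (∀ k : ℕ, 1 ≤ k → k ≤ n →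
        ∀ t ∈ Set.Icc (thetaNet θ a b n (k - 1)) (thetaNet θ a b n k), ∀ ω : Ω,
          S t ω =
            ((thetaNet θ a b n k - t) * S (thetaNet θ a b n (k - 1)) ω
              + (t - thetaNet θ a b n (k - 1)) * S (thetaNet θ a b n k) ω)
              / (thetaNet θ a b n k - thetaNet θ a b n (k - 1))) ∧
      -- `√n · sup_{t ∈ [a,b]} ‖Y_t − S^n_t‖_p ≤ c₆`
      ENNReal.ofReal (Real.sqrt n) * (⨆ t ∈ Set.Icc a b, eLpNorm (Y t - S t) p μ)
        ≤ ENNReal.ofReal c₆) :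
    ∃ c : ℝ, 0 < c ∧ ∀ t ∈ Set.Ico a b,
      eLpNorm (Y b - μ[Y b|F t]) p μ ≤ ENNReal.ofReal (c * (b - t) ^ (θ / 2)) := by
  have hp : 1 ≤ p := le_trans (by norm_num) hp1
  have hb : b ∈ Set.Icc a b := ⟨hab.le, le_rfl⟩
  have hba : 0 < b - a := sub_pos.2 hab
  set M := (eLpNorm (Y b) p μ).toReal
  set C := 6 * √2 * c₆ + 2 * M + 1
  have hM : 0 ≤ M := ENNReal.toReal_nonneg
  have h2c₆ : 0 ≤ √2 * c₆ := mul_nonneg (Real.sqrt_nonneg 2) hc₆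
  refine ⟨C * (2 / (b - a)) ^ (θ / 2), by positivity, fun t ht => ?_⟩
  have hbt : 0 < b - t := sub_pos.2 ht.2
  rw [mul_assoc, ← Real.mul_rpow (by positivity) hbt.le]
  rcases le_or_gt (2 / (b - a) * (b - t)) 1 with hr1 | hr1
  · refine (eLpNorm_sub_condExp_le_of_forall_thetaNet_spline hp hab hθ.1 hc₆ (hF_le t) hF_mono
      (fun n hn => ?_) ht hr1 (hY_adapted t ⟨ht.1, ht.2.le⟩) (hY_Lp t ⟨ht.1, ht.2.le⟩)
      (hY_Lp b hb)).trans (ENNReal.ofReal_le_ofReal ?_)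
    · obtain ⟨S, hknots, hinterp, hsup⟩ := hS n hn
      exact ⟨S, ⟨hknots, hinterp⟩, hsup⟩
    · exact mul_le_mul_of_nonneg_right (by linarith) (by positivity)
  · calc eLpNorm (Y b - μ[Y b|F t]) p μ ≤ 2 * eLpNorm (Y b) p μ :=
          eLpNorm_sub_condExp_le_two_mul hp (hY_Lp b hb).1
      _ = ENNReal.ofReal (2 * M) := by
          rw [ENNReal.ofReal_mul zero_le_two, ENNReal.ofReal_toReal (hY_Lp b hb).2.ne]; simp
      _ ≤ ENNReal.ofReal (C * (2 / (b - a) * (b - t)) ^ (θ / 2)) :=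
          ENNReal.ofReal_le_ofReal <| (show 2 * M ≤ C by linarith).trans <|
            le_mul_of_one_le_right (by linarith) (Real.one_le_rpow hr1.le (by linarith [hθ.1]))

/-- **(C6_l) ⇒ (C4_l), abstract form.** If an adapted `L^p`-family `(Y_t)_{t ∈ [a,b]}`
admits, for every `n ≥ 1`, an adapted spline `S^n` based on the `θ`-net on `[a,b]` with
`√n · sup_{t ∈ [a,b]} ‖Y_t − S^n_t‖_p ≤ c₆`, then there is a constant `c > 0` such that
`‖Y_b − E(Y_b|ℱ_t)‖_p ≤ c (b−t)^{θ/2}` for all `t ∈ [a,b)`. -/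
theorem C6_implies_C4_abstract
    {Ω : Type*} {mΩ : MeasurableSpace Ω} (μ : Measure Ω) [IsProbabilityMeasure μ]
    (p : ℝ≥0∞) (hp1 : 2 ≤ p) (hp2 : p ≠ ∞)
    (a b θ c₆ : ℝ) (hab : a < b) (hθ : θ ∈ Set.Ioc (0 : ℝ) 1) (hc₆ : 0 ≤ c₆)
    (F : ℝ → MeasurableSpace Ω) (hF_le : ∀ t, F t ≤ mΩ)
    (hF_mono : ∀ s t : ℝ, a ≤ s → s ≤ t → t ≤ b → F s ≤ F t)
    (Y : ℝ → Ω → ℝ)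
    (hY_adapted : ∀ t ∈ Set.Icc a b, StronglyMeasurable[F t] (Y t))
    (hY_Lp : ∀ t ∈ Set.Icc a b, MemLp (Y t) p μ)
    (hS : ∀ n : ℕ, 1 ≤ n → ∃ S : ℝ → Ω → ℝ,
      -- `S` has adapted, `L^p` knots at the net points
      (∀ k : ℕ, k ≤ n → MemLp (S (thetaNet θ a b n k)) p μ ∧
        StronglyMeasurable[F (thetaNet θ a b n k)] (S (thetaNet θ a b n k))) ∧
      -- `S` is the linear interpolation of its knots over the net intervals
      (∀ k : ℕ, 1 ≤ k → k ≤ n →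
        ∀ t ∈ Set.Icc (thetaNet θ a b n (k - 1)) (thetaNet θ a b n k), ∀ ω : Ω,
          S t ω =
            ((thetaNet θ a b n k - t) * S (thetaNet θ a b n (k - 1)) ω
              + (t - thetaNet θ a b n (k - 1)) * S (thetaNet θ a b n k) ω)
              / (thetaNet θ a b n k - thetaNet θ a b n (k - 1))) ∧
      -- `√n · sup_{t ∈ [a,b]} ‖Y_t − S^n_t‖_p ≤ c₆`
      ENNReal.ofReal (Real.sqrt n) * (⨆ t ∈ Set.Icc a b, eLpNorm (Y t - S t) p μ)
        ≤ ENNReal.ofReal c₆) :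
    ∃ c : ℝ, 0 < c ∧ ∀ t ∈ Set.Ico a b,
      eLpNorm (Y b - μ[Y b|F t]) p μ ≤ ENNReal.ofReal (c * (b - t) ^ (θ / 2)) :=
  C6_implies_C4_abstract_general μ p hp1 a b θ c₆ hab hθ hc₆ F hF_le hF_mono Y hY_adapted hY_Lp hS
end

section
/- Let (Ω, ℱ, (ℱ_t)_{t∈[a,b]}, μ) be a filtered probability space, 2 ≤ p < ∞, θ ∈ (0,1], and c₇ ≥ 0. Let (Y_t)_{t∈[a,b]} be an adapted family of real random variables with Y_t ∈ L^p(μ) for all t, and suppose that for every t ∈ [a,b) one has sup_{n≥1} √n · e_n({Y_s : s ∈ [t,b]} | L^p(μ)) ≤ c₇ (b−t)^{θ/2}. Then ‖Y_b − E(Y_b|ℱ_t)‖_p ≤ 4 c₇ (b−t)^{θ/2} for all t ∈ [a,b). -/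
open MeasureTheory
open scoped ENNReal

/-! Only the first entropy number enters: one ball of radius `e₁(A)` covers `A`, so the diameter
of `A` is at most `2 e₁(A)`. Since `Y_t` is `ℱ_t`-measurable, `E(Y_b|ℱ_t) - Y_t = E(Y_b - Y_t|ℱ_t)`,
and the `L^p`-contractivity of conditional expectation gives
`‖Y_b - E(Y_b|ℱ_t)‖_p ≤ 2 ‖Y_b - Y_t‖_p ≤ 4 e₁({Y_s : s ∈ [t,b]})`. -/

/-- The `n`-th entropy number of a set `A` in a (semi)normed space `E`:
`e_n(A|E) = inf { ε > 0 : A can be covered by n closed balls of radius ε }`,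
with value in `ℝ≥0∞` (so `e_n(A|E) = ∞` if no finite cover exists). -/
noncomputable def entropyNumber {E : Type*} [SeminormedAddCommGroup E]
    (n : ℕ) (A : Set E) : ℝ≥0∞ :=
  sInf {ε : ℝ≥0∞ | ∃ x : Fin n → E, ∀ a ∈ A, ∃ i, edist a (x i) ≤ ε}

theorem edist_le_two_mul_entropyNumber_one {E : Type*} [SeminormedAddCommGroup E] {A : Set E}
    {x y : E} (hx : x ∈ A) (hy : y ∈ A) : edist x y ≤ 2 * entropyNumber 1 A := by
  rw [mul_comm, ← ENNReal.div_le_iff two_ne_zero ENNReal.ofNat_ne_top]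
  refine le_sInf fun ε ⟨c, hc⟩ => ?_
  obtain ⟨i, hi⟩ := hc x hx
  obtain ⟨j, hj⟩ := hc y hy
  rw [Subsingleton.elim j i] at hj
  rw [ENNReal.div_le_iff two_ne_zero ENNReal.ofNat_ne_top, mul_two]
  calc edist x y ≤ edist x (c i) + edist y (c i) := edist_triangle_right _ _ _
    _ ≤ ε + ε := add_le_add hi hj

theorem eLpNorm_sub_condExp_le_two_mul {α E : Type*} {m m0 : MeasurableSpace α} {μ : Measure α}
    [NormedAddCommGroup E] [NormedSpace ℝ E] [CompleteSpace E]
    (hm : m ≤ m0) [SigmaFinite (μ.trim hm)] {p : ℝ≥0∞} (hp : 1 ≤ p) {f g : α → E}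
    (hf : Integrable f μ) (hg : Integrable g μ) (hgm : StronglyMeasurable[m] g) :
    eLpNorm (f - μ[f|m]) p μ ≤ 2 * eLpNorm (f - g) p μ := by
  have hrw : f - μ[f|m] =ᵐ[μ] (f - g) - μ[f - g|m] := by
    filter_upwards [condExp_sub hf hg m] with ω hω
    simp [hω, condExp_of_stronglyMeasurable hm hgm hg]
  calc eLpNorm (f - μ[f|m]) p μ = eLpNorm ((f - g) - μ[f - g|m]) p μ := eLpNorm_congr_ae hrw
    _ ≤ eLpNorm (f - g) p μ + eLpNorm (μ[f - g|m]) p μ :=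
        eLpNorm_sub_le (hf.sub hg).aestronglyMeasurable
          integrable_condExp.aestronglyMeasurable hp
    _ ≤ eLpNorm (f - g) p μ + eLpNorm (f - g) p μ := by
        gcongr; exact eLpNorm_condExp_le_eLpNorm _ hp
    _ = 2 * eLpNorm (f - g) p μ := (two_mul _).symm

theorem C7_implies_C4_abstract_general
    {Ω : Type*} {mΩ : MeasurableSpace Ω} (μ : Measure Ω) [IsProbabilityMeasure μ]
    (p : ℝ≥0∞) [Fact (1 ≤ p)]
    (a b θ c₇ : ℝ)
    (F : ℝ → MeasurableSpace Ω) (hF_le : ∀ t, F t ≤ mΩ)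
    (Y : ℝ → Ω → ℝ)
    (hY_adapted : ∀ t ∈ Set.Icc a b, StronglyMeasurable[F t] (Y t))
    (hY_Lp : ∀ t ∈ Set.Icc a b, MemLp (Y t) p μ)
    (hEnt : ∀ t ∈ Set.Ico a b, ∀ n : ℕ, 1 ≤ n →
      ENNReal.ofReal (Real.sqrt n) *
          entropyNumber n {g : Lp ℝ p μ | ∃ s ∈ Set.Icc t b, (g : Ω → ℝ) =ᵐ[μ] Y s}
        ≤ ENNReal.ofReal (c₇ * (b - t) ^ (θ / 2))) :
    ∀ t ∈ Set.Ico a b,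
      eLpNorm (Y b - μ[Y b|F t]) p μ ≤ ENNReal.ofReal (4 * c₇ * (b - t) ^ (θ / 2)) := by
  intro t ht
  have ht' : t ∈ Set.Icc a b := Set.Ico_subset_Icc_self ht
  have hb : b ∈ Set.Icc a b := ⟨ht.1.trans ht.2.le, le_rfl⟩
  have hYb := hY_Lp b hb
  have hYt := hY_Lp t ht'
  have he₁ := hEnt t ht 1 le_rfl
  rw [Nat.cast_one, Real.sqrt_one, ENNReal.ofReal_one, one_mul] at he₁
  have hdist : eLpNorm (Y b - Y t) p μ ≤ 2 * ENNReal.ofReal (c₇ * (b - t) ^ (θ / 2)) := by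
    rw [← Lp.edist_toLp_toLp _ _ hYb hYt]
    refine (edist_le_two_mul_entropyNumber_one ?_ ?_).trans (by gcongr)
    · exact ⟨b, ⟨ht.2.le, le_rfl⟩, hYb.coeFn_toLp⟩
    · exact ⟨t, ⟨le_rfl, ht.2.le⟩, hYt.coeFn_toLp⟩
  have := isFiniteMeasure_trim (μ := μ) (hF_le t)
  calc eLpNorm (Y b - μ[Y b|F t]) p μ ≤ 2 * eLpNorm (Y b - Y t) p μ :=
        eLpNorm_sub_condExp_le_two_mul (hF_le t) Fact.out (hYb.integrable Fact.out)
          (hYt.integrable Fact.out) (hY_adapted t ht')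
    _ ≤ 2 * (2 * ENNReal.ofReal (c₇ * (b - t) ^ (θ / 2))) := by gcongr
    _ = ENNReal.ofReal (4 * c₇ * (b - t) ^ (θ / 2)) := by
        rw [mul_assoc (4 : ℝ), ENNReal.ofReal_mul (p := 4) (by norm_num), ← mul_assoc]
        norm_num

/-- **(C7_l) ⇒ (C4_l), abstract form.** If an adapted `L^p`-family `(Y_t)_{t ∈ [a,b]}`
satisfies `sup_{n ≥ 1} √n · e_n({Y_s : s ∈ [t,b]} | L^p(μ)) ≤ c₇ (b−t)^{θ/2}` for every
`t ∈ [a,b)`, then `‖Y_b − E(Y_b|ℱ_t)‖_p ≤ 4 c₇ (b−t)^{θ/2}` for all `t ∈ [a,b)`. -/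
theorem C7_implies_C4_abstract
    {Ω : Type*} {mΩ : MeasurableSpace Ω} (μ : Measure Ω) [IsProbabilityMeasure μ]
    (p : ℝ≥0∞) [Fact (1 ≤ p)] (hp1 : 2 ≤ p) (hp2 : p ≠ ∞)
    (a b θ c₇ : ℝ) (hab : a < b) (hθ : θ ∈ Set.Ioc (0 : ℝ) 1) (hc₇ : 0 ≤ c₇)
    (F : ℝ → MeasurableSpace Ω) (hF_le : ∀ t, F t ≤ mΩ)
    (hF_mono : ∀ s t : ℝ, a ≤ s → s ≤ t → t ≤ b → F s ≤ F t)
    (Y : ℝ → Ω → ℝ)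
    (hY_adapted : ∀ t ∈ Set.Icc a b, StronglyMeasurable[F t] (Y t))
    (hY_Lp : ∀ t ∈ Set.Icc a b, MemLp (Y t) p μ)
    (hEnt : ∀ t ∈ Set.Ico a b, ∀ n : ℕ, 1 ≤ n →
      ENNReal.ofReal (Real.sqrt n) *
          entropyNumber n {g : Lp ℝ p μ | ∃ s ∈ Set.Icc t b, (g : Ω → ℝ) =ᵐ[μ] Y s}
        ≤ ENNReal.ofReal (c₇ * (b - t) ^ (θ / 2))) :
    ∀ t ∈ Set.Ico a b,
      eLpNorm (Y b - μ[Y b|F t]) p μ ≤ ENNReal.ofReal (4 * c₇ * (b - t) ^ (θ / 2)) :=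
  C7_implies_C4_abstract_general μ p a b θ c₇ F hF_le Y hY_adapted hY_Lp hEnt
end

section
/- Let a < b be real numbers, 1 ≤ p < ∞, λ > 0, and let R : [a,b) → [0,∞) be a measurable function such that R(s) ≤ 2 R(r) whenever a ≤ r ≤ s < b. Then for every s ∈ ((a+b)/2, b) one has R(s)^p ≤ 2^{p+λ} (b−s)^{λ−1} ∫_a^b (b−r)^{−λ} R(r)^p dr, where the integral is the Lebesgue integral (possibly +∞). -/
open MeasureTheory
open scoped ENNReal

/-!
On the window `(2s - b, s)`, of length `b - s` and contained in `(a, b)`, the doubling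
property gives `R r ≥ R s / 2` and the weight satisfies `(b - r)^(-λ) ≥ (2 (b - s))^(-λ)`.
Integrating this constant lower bound over the window alone already gives the estimate.
-/

lemma two_rpow_add_mul_rpow_sub_one_mul_eq {x y p lam : ℝ} (hx : 0 < x) (hy : 0 ≤ y) :
    2 ^ (p + lam) * x ^ (lam - 1) * ((2 * x) ^ (-lam) * (y / 2) ^ p * x) = y ^ p := by
  have h2 : (0 : ℝ) < 2 := two_pos
  rw [Real.mul_rpow h2.le hx.le, Real.div_rpow hy h2.le, Real.rpow_sub_one hx.ne',
    Real.rpow_add h2, Real.rpow_neg hx.le, Real.rpow_neg h2.le]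
  have : x ^ lam ≠ 0 := (Real.rpow_pos_of_pos hx lam).ne'
  have : (2 : ℝ) ^ lam ≠ 0 := (Real.rpow_pos_of_pos h2 lam).ne'
  have : (2 : ℝ) ^ p ≠ 0 := (Real.rpow_pos_of_pos h2 p).ne'
  field_simp

lemma rpow_neg_mul_rpow_le_rpow_neg_mul_rpow {u v y z p lam : ℝ} (hu : 0 < u) (huv : u ≤ v)
    (hy : 0 ≤ y) (hyz : y ≤ z) (hp : 0 ≤ p) (hlam : 0 ≤ lam) :
    v ^ (-lam) * y ^ p ≤ u ^ (-lam) * z ^ p :=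
  mul_le_mul (Real.rpow_le_rpow_of_nonpos hu huv (neg_nonpos.mpr hlam))
    (Real.rpow_le_rpow hy hyz hp) (Real.rpow_nonneg hy p) (Real.rpow_nonneg hu.le _)

theorem doubling_global_to_local_decay_general
    (a b p lam : ℝ) (hp : 1 ≤ p) (hlam : 0 < lam)
    (R : ℝ → ℝ)
    (hR_doubling : ∀ r s : ℝ, a ≤ r → r ≤ s → s < b → R s ≤ 2 * R r)
    (s : ℝ) (hs1 : (a + b) / 2 < s) (hs2 : s < b) :
    ENNReal.ofReal (R s ^ p)
      ≤ ENNReal.ofReal ((2 : ℝ) ^ (p + lam) * (b - s) ^ (lam - 1)) *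
          ∫⁻ r in Set.Ioo a b, ENNReal.ofReal ((b - r) ^ (-lam) * R r ^ p) := by
  have hx : 0 < b - s := by linarith
  have hRs : 0 ≤ R s := by linarith [hR_doubling s s (by linarith) le_rfl hs2]
  set m := (2 * (b - s)) ^ (-lam) * (R s / 2) ^ p
  set K := (2 : ℝ) ^ (p + lam) * (b - s) ^ (lam - 1)
  have hwindow : ∀ r ∈ Set.Ioo (2 * s - b) s,
      ENNReal.ofReal m ≤ ENNReal.ofReal ((b - r) ^ (-lam) * R r ^ p) := by
    rintro r ⟨hr_left, hr_right⟩
    have hR_half : R s / 2 ≤ R r := by linarith [hR_doubling r s (by linarith) hr_right.le hs2]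
    exact ENNReal.ofReal_le_ofReal <| rpow_neg_mul_rpow_le_rpow_neg_mul_rpow (by linarith)
      (by linarith) (by positivity) hR_half (by linarith) hlam.le
  calc ENNReal.ofReal (R s ^ p)
      = ENNReal.ofReal K * (ENNReal.ofReal m * volume (Set.Ioo (2 * s - b) s)) := by
        rw [Real.volume_Ioo, show s - (2 * s - b) = b - s by ring,
          ← ENNReal.ofReal_mul (by positivity), ← ENNReal.ofReal_mul (by positivity),
          two_rpow_add_mul_rpow_sub_one_mul_eq hx hRs]
    _ ≤ ENNReal.ofReal K *
          ∫⁻ r in Set.Ioo (2 * s - b) s, ENNReal.ofReal ((b - r) ^ (-lam) * R r ^ p) := by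
        rw [← setLIntegral_const]
        gcongr 1
        exact setLIntegral_mono' measurableSet_Ioo hwindow
    _ ≤ ENNReal.ofReal K *
          ∫⁻ r in Set.Ioo a b, ENNReal.ofReal ((b - r) ^ (-lam) * R r ^ p) := by
        gcongr 1
        exact lintegral_mono_set (Set.Ioo_subset_Ioo (by linarith) hs2.le)

/-- **Local decay from global weighted integrability of a doubling function.**
Let `1 ≤ p < ∞`, `λ > 0` and let `R : [a,b) → [0,∞)` be measurable with
`R(s) ≤ 2 R(r)` whenever `a ≤ r ≤ s < b`. Then for every `s ∈ ((a+b)/2, b)`,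
`R(s)^p ≤ 2^{p+λ} (b−s)^{λ−1} ∫_a^b (b−r)^{−λ} R(r)^p dr`
(the integral being a Lebesgue integral, possibly `+∞`). -/
theorem doubling_global_to_local_decay
    (a b p lam : ℝ) (hab : a < b) (hp : 1 ≤ p) (hlam : 0 < lam)
    (R : ℝ → ℝ) (hR_meas : Measurable R)
    (hR_nonneg : ∀ r ∈ Set.Ico a b, 0 ≤ R r)
    (hR_doubling : ∀ r s : ℝ, a ≤ r → r ≤ s → s < b → R s ≤ 2 * R r)
    (s : ℝ) (hs1 : (a + b) / 2 < s) (hs2 : s < b) :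
    ENNReal.ofReal (R s ^ p)
      ≤ ENNReal.ofReal ((2 : ℝ) ^ (p + lam) * (b - s) ^ (lam - 1)) *
          ∫⁻ r in Set.Ioo a b, ENNReal.ofReal ((b - r) ^ (-lam) * R r ^ p) :=
  doubling_global_to_local_decay_general a b p lam hp hlam R hR_doubling s hs1 hs2
end
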